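/- arXiv:0909.1732 — 3 statements merged into one kernel-verified Lean document; each statement's English description precedes it below -/
import Mathlib

section
/- If (E, F) is an exceptional pair in a triangulated category D, then the triangulated subcategories generated by (L_E(F), E), by (E, F), and by (F, R_F(E)) all coincide. -/
open CategoryTheory Limits Pretriangulated

universe v u

variable (C : Type u) [Category.{v} C] [Preadditive C] [HasZeroObject C]
  [HasShift C ℤ] [∀ n : ℤ, (CategoryTheory.shiftFunctor C n).Additive] [Pretriangulated C]
  [CategoryTheory.Linear ℂ C]

/-- All graded morphisms from `X` to `Y` vanish. -/
def NoHoms (X Y : C) : Prop := ∀ n : ℤ, ∀ f : X ⟶ Y⟦n⟧, f = 0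

/-- The category `C` is of finite type: total graded Hom spaces are finite dimensional. -/
def FiniteType : Prop :=
  ∀ X Y : C, (∀ n : ℤ, FiniteDimensional ℂ (X ⟶ Y⟦n⟧)) ∧
    {n : ℤ | ∃ f : X ⟶ Y⟦n⟧, f ≠ 0}.Finite

/-- An exceptional object: `Hom^•(E,E) = ℂ`, concentrated in degree `0`. -/
def IsExceptional (E : C) : Prop :=
  (∀ n : ℤ, n ≠ 0 → ∀ f : E ⟶ E⟦n⟧, f = 0) ∧ Module.finrank ℂ (E ⟶ E) = 1

/-- Membership in the smallest strictly full triangulated subcategory containing `S`. -/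
inductive genTriang (S : Set C) : C → Prop
  | of (X : C) (hX : X ∈ S) : genTriang S X
  | isZero (X : C) (hX : IsZero X) : genTriang S X
  | iso {X Y : C} (e : X ≅ Y) (hX : genTriang S X) : genTriang S Y
  | shift (X : C) (n : ℤ) (hX : genTriang S X) : genTriang S (X⟦n⟧)
  | ext₂ (T : Triangle C) (hT : T ∈ distTriang C) (h₁ : genTriang S T.obj₁)
      (h₃ : genTriang S T.obj₃) : genTriang S T.obj₂

/-- The left orthogonal `^⊥S`. -/
def leftOrth (S : Set C) : Set C := {X | ∀ Y ∈ S, NoHoms C X Y}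

/-- The right orthogonal `S^⊥`. -/
def rightOrth (S : Set C) : Set C := {X | ∀ Y ∈ S, NoHoms C Y X}

/-- `Y` is the left mutation of `X` through (the subcategory generated by) `S`. -/
def IsLeftMutation (S : Set C) (X Y : C) : Prop :=
  X ∈ leftOrth C S ∧ Y ∈ rightOrth C S ∧
    ∃ (A : C) (f : A ⟶ X) (g : X ⟶ Y) (h : Y ⟶ A⟦(1:ℤ)⟧),
      genTriang C S A ∧ Triangle.mk f g h ∈ distTriang C

/-- `X` is the right mutation of `Y` through (the subcategory generated by) `S`. -/
def IsRightMutation (S : Set C) (X Y : C) : Prop :=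
  X ∈ leftOrth C S ∧ Y ∈ rightOrth C S ∧
    ∃ (A : C) (f : X ⟶ Y) (g : Y ⟶ A) (h : A ⟶ X⟦(1:ℤ)⟧),
      genTriang C S A ∧ Triangle.mk f g h ∈ distTriang C

/-- `IterLeftMut l X Y` : `Y ≅ L_{E₁} ⋯ L_{E_k} (X)` where `l = [E₁, …, E_k]`. -/
def IterLeftMut : List C → C → C → Prop
  | [], X, Y => Nonempty (X ≅ Y)
  | (E :: t), X, Y => ∃ Z, IterLeftMut t X Z ∧ IsLeftMutation C {E} Z Y

/-- `IterRightMut l Y X` : `X ≅ R_{E_k} ⋯ R_{E₁} (Y)` where `l = [E₁, …, E_k]`. -/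
def IterRightMut : List C → C → C → Prop
  | [], Y, X => Nonempty (Y ≅ X)
  | (E :: t), Y, X => ∃ Z, IsRightMutation C {E} Z Y ∧ IterRightMut t Z X

/-- `E 0, …, E (n-1)` is an exceptional collection. -/
def ExcCollection (n : ℕ) (E : ℕ → C) : Prop :=
  (∀ i < n, IsExceptional C (E i)) ∧
    ∀ i j, i < j → j < n → NoHoms C (E j) (E i)

/-- The set of objects of the collection `E 0, …, E (n-1)`. -/
def collSet (n : ℕ) (E : ℕ → C) : Set C := {X | ∃ i < n, X = E i}


lemma genTriang_mono {S T : Set C} (h : ∀ x ∈ S, genTriang C T x) :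
    ∀ X, genTriang C S X → genTriang C T X := by
  intro X hX
  induction hX with
  | of X hX => exact h X hX
  | isZero X hX => exact .isZero X hX
  | iso e _ ih => exact .iso e ih
  | shift X n _ ih => exact .shift X n ih
  | ext₂ T hT _ _ ih₁ ih₃ => exact .ext₂ T hT ih₁ ih₃

lemma genTriang_ext₃ {S : Set C} (T : Triangle C) (hT : T ∈ distTriang C)
    (h₁ : genTriang C S T.obj₁) (h₂ : genTriang C S T.obj₂) : genTriang C S T.obj₃ :=
  genTriang.ext₂ T.rotate (rot_of_distTriang T hT) h₂ (genTriang.shift _ 1 h₁)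

lemma genTriang_ext₁ {S : Set C} (T : Triangle C) (hT : T ∈ distTriang C)
    (h₂ : genTriang C S T.obj₂) (h₃ : genTriang C S T.obj₃) : genTriang C S T.obj₁ :=
  genTriang.ext₂ T.invRotate (inv_rot_of_distTriang T hT) (genTriang.shift _ (-1) h₃) h₂

/-- If `(E, F)` is an exceptional pair, then the triangulated subcategories
generated by `(L_E F, E)`, by `(E, F)` and by `(F, R_F E)` all coincide. -/
theorem mutation_generates_same_subcategory (hft : FiniteType C) (E F L R : C)
    (hE : IsExceptional C E) (hF : IsExceptional C F) (hFE : NoHoms C F E)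
    (hL : IsLeftMutation C ({E} : Set C) F L)
    (hR : IsRightMutation C ({F} : Set C) R E) :
    ∀ X : C, (genTriang C ({L, E} : Set C) X ↔ genTriang C ({E, F} : Set C) X) ∧
      (genTriang C ({F, R} : Set C) X ↔ genTriang C ({E, F} : Set C) X) := by
  obtain ⟨-, -, A, f, g, h, hA, hT⟩ := hL
  obtain ⟨-, -, B, f', g', h', hB, hT'⟩ := hR
  -- basic memberships
  have hE_EF : genTriang C ({E, F} : Set C) E := .of E (by simp)
  have hF_EF : genTriang C ({E, F} : Set C) F := .of F (by simp)
  have hE_LE : genTriang C ({L, E} : Set C) E := .of E (by simp)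
  have hL_LE : genTriang C ({L, E} : Set C) L := .of L (by simp)
  have hF_FR : genTriang C ({F, R} : Set C) F := .of F (by simp)
  have hR_FR : genTriang C ({F, R} : Set C) R := .of R (by simp)
  have hA_EF : genTriang C ({E, F} : Set C) A :=
    genTriang_mono C (by rintro x rfl; exact hE_EF) A hA
  have hA_LE : genTriang C ({L, E} : Set C) A :=
    genTriang_mono C (by rintro x rfl; exact hE_LE) A hA
  have hB_EF : genTriang C ({E, F} : Set C) B :=
    genTriang_mono C (by rintro x rfl; exact hF_EF) B hB
  have hB_FR : genTriang C ({F, R} : Set C) B :=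
    genTriang_mono C (by rintro x rfl; exact hF_FR) B hB
  -- L ∈ ⟨E, F⟩  (triangle A → F → L)
  have hL_EF : genTriang C ({E, F} : Set C) L :=
    genTriang_ext₃ C (Triangle.mk f g h) hT hA_EF hF_EF
  -- F ∈ ⟨L, E⟩
  have hF_LE : genTriang C ({L, E} : Set C) F :=
    genTriang.ext₂ (Triangle.mk f g h) hT hA_LE hL_LE
  -- E ∈ ⟨F, R⟩  (triangle R → E → B)
  have hE_FR : genTriang C ({F, R} : Set C) E :=
    genTriang.ext₂ (Triangle.mk f' g' h') hT' hR_FR hB_FR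
  -- R ∈ ⟨E, F⟩
  have hR_EF : genTriang C ({E, F} : Set C) R :=
    genTriang_ext₁ C (Triangle.mk f' g' h') hT' hE_EF hB_EF
  intro X
  constructor
  · constructor
    · exact genTriang_mono C (by rintro x (rfl | rfl); exacts [hL_EF, hE_EF]) X
    · exact genTriang_mono C (by rintro x (rfl | rfl); exacts [hE_LE, hF_LE]) X
  · constructor
    · exact genTriang_mono C (by rintro x (rfl | rfl); exacts [hF_EF, hR_EF]) X
    · exact genTriang_mono C (by rintro x (rfl | rfl); exacts [hE_FR, hF_FR]) X
end

section
/- Suppose E → X → Y is a distinguished triangle in D with E ∈ ⟨𝔼⟩, X ∈ ^⊥𝔼 and Y ∈ 𝔼^⊥, where 𝔼 is an exceptional collection. Then Y ≅ L_𝔼(X) and X ≅ R_𝔼(Y). -/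
open CategoryTheory Limits Pretriangulated

universe v u

variable (C : Type u) [Category.{v} C] [Preadditive C] [HasZeroObject C]
  [HasShift C ℤ] [∀ n : ℤ, (CategoryTheory.shiftFunctor C n).Additive] [Pretriangulated C]
  [CategoryTheory.Linear ℂ C]

/-!
Call `c : X ⟶ W` local if precomposition with `c` is a bijection `Hom(W, Q) ≃ Hom(X, Q)` for
every `Q ∈ 𝔼^⊥`. Two local morphisms out of `X` with targets in `𝔼^⊥` have isomorphic targets.
In the given triangle `A → X → Y`, the morphism `X → Y` is local because
`Hom(A, Q) = Hom(A[1], Q) = 0`.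

On the other side, the chain of single mutations `L_{E_1} ⋯ L_{E_k} X` exists because `D` is of
finite type: the cone of the evaluation map `⊕ₘ Hom(E, P[m]) ⊗ E[-m] → P` lies in `E^⊥`, since
the evaluation map induces isomorphisms on every `Hom(E, -[k])`. The composite `X → L_𝔼 X` of
the mutation morphisms is local, and semiorthogonality of the collection keeps every intermediate
object in `^⊥E_i`, so the next mutation is defined. Hence `Y ≅ L_𝔼 X`, and rotating each
mutation triangle gives `X ≅ R_𝔼 Y`.
-/

open ZeroObject

section

variable {D : Type*}

lemma setOf_mem_map_range_eq_collSet (n : ℕ) (E : ℕ → D) :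
    {e | e ∈ (List.range n).map E} = collSet D n E := by
  ext
  simp [collSet, eq_comm]

variable [Category D]

lemma nonempty_iso_of_isLocal {P : ObjectProperty D} {X W Y : D} {c : X ⟶ W} {g : X ⟶ Y}
    (hc : P.isLocal c) (hg : P.isLocal g) (hW : P W) (hY : P Y) : Nonempty (W ≅ Y) := by
  obtain ⟨φ, rfl⟩ := (hc Y hY).2 g
  have := (P.isLocal_iff_isIso φ hW hY).1 (P.isLocal.of_precomp c φ hc hg)
  exact ⟨asIso φ⟩

variable [Preadditive D]

lemma eq_sum_comp_map_biproduct {D' : Type*} [Category D'] [Preadditive D'] (F : D ⥤ D')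
    [F.Additive] {ι : Type} [Fintype ι] (G : ι → D) [HasBiproduct G] {X : D'}
    (v : X ⟶ F.obj (⨁ G)) :
    v = ∑ i, (v ≫ F.map (biproduct.π G i)) ≫ F.map (biproduct.ι G i) := by
  conv_lhs => rw [← Category.comp_id v, ← F.map_id, ← biproduct.total (f := G), F.map_sum,
    Preadditive.comp_sum]
  simp only [Functor.map_comp, Category.assoc]

variable [HasShift D ℤ]

lemma NoHoms.eq_zero {X Y : D} (h : NoHoms D X Y) (f : X ⟶ Y) : f = 0 := by
  rw [← cancel_mono ((shiftFunctorZero D ℤ).inv.app Y), zero_comp]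
  exact h 0 _

lemma noHoms_iff_homologicalKernel {X Y : D} :
    NoHoms D X Y ↔ (preadditiveCoyoneda.obj (Opposite.op X)).homologicalKernel Y := by
  simp only [Functor.mem_homologicalKernel_iff, AddCommGrpCat.isZero_iff_subsingleton]
  exact forall_congr' fun n => ⟨fun h => ⟨fun a b => (h a).trans (h b).symm⟩,
    fun h f => @Subsingleton.elim _ h f 0⟩

lemma NoHoms.of_iso {X Y Y' : D} (h : NoHoms D X Y) (e : Y ≅ Y') : NoHoms D X Y' := by
  rw [noHoms_iff_homologicalKernel] at h ⊢
  exact ObjectProperty.prop_of_iso _ e h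

lemma noHoms_iff_leftOrthogonal {X Y : D} :
    NoHoms D X Y ↔ ((ObjectProperty.singleton Y).shiftClosure ℤ).leftOrthogonal X := by
  constructor
  · rintro h Z f ⟨_, n, e, ⟨_⟩⟩
    rw [← cancel_mono e.hom, zero_comp]
    exact h n _
  · intro h n f
    exact h f ⟨Y, n, Iso.refl _, ⟨()⟩⟩

lemma rightOrth_anti {S T : Set D} (h : S ⊆ T) : rightOrth D T ⊆ rightOrth D S :=
  fun _ hX Y hY => hX Y (h hY)

lemma leftOrth_anti {S T : Set D} (h : S ⊆ T) : leftOrth D T ⊆ leftOrth D S :=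
  fun _ hX Y hY => hX Y (h hY)

lemma mem_leftOrth_singleton {X E : D} : X ∈ leftOrth D {E} ↔ NoHoms D X E := by
  simp [leftOrth]

lemma mem_rightOrth_singleton {X E : D} : X ∈ rightOrth D {E} ↔ NoHoms D E X := by
  simp [rightOrth]

lemma rightOrth_cons {E X : D} {l : List D} (hE : NoHoms D E X)
    (hl : X ∈ rightOrth D {e | e ∈ l}) : X ∈ rightOrth D {e | e ∈ E :: l} := by
  intro s hs
  rcases List.mem_cons.1 hs with rfl | hs
  exacts [hE, hl s hs]

section Linear

variable [Linear ℂ D]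

lemma IsExceptional.exists_eq_smul_id {E : D} (hE : IsExceptional D E) (f : E ⟶ E) :
    ∃ c : ℂ, f = c • 𝟙 E := by
  have hid : 𝟙 E ≠ 0 := fun h => by
    have : Subsingleton (E ⟶ E) := ⟨((IsZero.iff_id_eq_zero E).2 h).eq_of_src⟩
    have h1 := hE.2
    rw [Module.finrank_zero_of_subsingleton] at h1
    exact zero_ne_one h1
  obtain ⟨c, hc⟩ := (finrank_eq_one_iff_of_nonzero' (𝟙 E) hid).1 hE.2 f
  exact ⟨c, hc.symm⟩

lemma IsExceptional.hom_shift_shift_eq_zero {E : D} (hE : IsExceptional D E) {m k : ℤ}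
    (h : m ≠ k) (v : E ⟶ E⟦-m⟧⟦k⟧) : v = 0 := by
  rw [← cancel_mono ((shiftFunctorAdd' D (-m) k (k - m) (by omega)).inv.app E), zero_comp]
  exact hE.1 (k - m) (sub_ne_zero.2 h.symm) _

lemma IsExceptional.exists_eq_smul_of_isIso {E X : D} (hE : IsExceptional D E) (u : E ⟶ X)
    [IsIso u] (v : E ⟶ X) : ∃ c : ℂ, v = c • u := by
  obtain ⟨c, hc⟩ := hE.exists_eq_smul_id (v ≫ inv u)
  refine ⟨c, ?_⟩
  rw [← cancel_mono (inv u), hc, Linear.smul_comp, IsIso.hom_inv_id]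

lemma ExcCollection.forall_mem_isExceptional {n : ℕ} {E : ℕ → D} (hE : ExcCollection D n E) :
    ∀ e ∈ (List.range n).map E, IsExceptional D e := by
  simpa using hE.1

lemma ExcCollection.pairwise {n : ℕ} {E : ℕ → D} (hE : ExcCollection D n E) :
    ((List.range n).map E).Pairwise fun a b => NoHoms D b a := by
  rw [List.pairwise_map]
  exact List.pairwise_lt_range.imp_of_mem fun _ hj hij => hE.2 _ _ hij (List.mem_range.1 hj)

end Linear

variable [HasZeroObject D] [∀ n : ℤ, (shiftFunctor D n).Additive] [Pretriangulated D]

instance (S : Set D) : ObjectProperty.IsClosedUnderIsomorphisms (genTriang D S) :=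
  ⟨fun e h => .iso e h⟩

instance (S : Set D) : ObjectProperty.IsTriangulated (genTriang D S) where
  exists_zero := ⟨0, isZero_zero D, .isZero _ (isZero_zero D)⟩
  isStableUnderShiftBy n := ⟨fun X h => .shift X n h⟩
  ext₂' T hT h₁ h₃ := ObjectProperty.le_isoClosure _ _ (.ext₂ T hT h₁ h₃)

lemma genTriang_le {S : Set D} {Q : ObjectProperty D} [Q.IsTriangulated]
    [Q.IsClosedUnderIsomorphisms] (hS : ∀ X ∈ S, Q X) : genTriang D S ≤ Q := by
  intro X hX
  induction hX with
  | of X hX => exact hS X hX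
  | isZero X hX => exact Q.prop_of_isZero hX
  | iso e _ ih => exact Q.prop_of_iso e ih
  | shift X n _ ih => exact Q.le_shift n X ih
  | ext₂ T hT _ _ ih₁ ih₃ => exact Q.ext_of_isTriangulatedClosed₂ T hT ih₁ ih₃

lemma genTriang_biproduct {S : Set D} {ι : Type*} [Finite ι] (G : ι → D) [HasBiproduct G]
    (h : ∀ i, genTriang D S (G i)) : genTriang D S (⨁ G) :=
  .iso (biproduct.isoProduct G).symm (ObjectProperty.prop_product (genTriang D S) h)

lemma NoHoms.shift {X Y : D} (h : NoHoms D X Y) (n : ℤ) : NoHoms D X (Y⟦n⟧) := by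
  rw [noHoms_iff_homologicalKernel] at h ⊢
  exact ObjectProperty.le_shift _ n Y h

lemma NoHoms.of_distTriang {X : D} {T : Triangle D} (hT : T ∈ distTriang D)
    (h₁ : NoHoms D X T.obj₁) (h₃ : NoHoms D X T.obj₃) : NoHoms D X T.obj₂ := by
  rw [noHoms_iff_homologicalKernel] at h₁ h₃ ⊢
  exact ObjectProperty.ext_of_isTriangulatedClosed₂ _ T hT h₁ h₃

lemma noHoms_of_genTriang_left {S : Set D} {A W : D} (hA : genTriang D S A)
    (hW : W ∈ rightOrth D S) : NoHoms D A W :=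
  noHoms_iff_leftOrthogonal.2 <|
    genTriang_le (fun s hs => noHoms_iff_leftOrthogonal.1 (hW s hs)) A hA

lemma noHoms_of_genTriang_right {S : Set D} {A W : D} (hA : genTriang D S A)
    (hW : W ∈ leftOrth D S) : NoHoms D W A :=
  noHoms_iff_homologicalKernel.2 <|
    genTriang_le (fun s hs => noHoms_iff_homologicalKernel.1 (hW s hs)) A hA

lemma noHoms_of_distTriang_of_bijective {E B P W : D} {a : B ⟶ P} {d : P ⟶ W}
    {h : W ⟶ B⟦(1 : ℤ)⟧} (hT : Triangle.mk a d h ∈ distTriang D)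
    (hbij : ∀ k : ℤ, Function.Bijective fun v : E ⟶ B⟦k⟧ => v ≫ a⟦k⟧') : NoHoms D E W := by
  let F := preadditiveCoyoneda.obj (Opposite.op E)
  rw [noHoms_iff_homologicalKernel]
  refine (F.homologicalKernel.trW_iff_of_distinguished _ hT).1 ?_
  exact (F.mem_homologicalKernel_trW_iff a).2 fun n =>
    (ConcreteCategory.isIso_iff_bijective _).2 (hbij n)

lemma isLocal_rightOrth_of_distTriang {S : Set D} {A X Y : D} {f : A ⟶ X} {g : X ⟶ Y}
    {h : Y ⟶ A⟦(1 : ℤ)⟧} (hT : Triangle.mk f g h ∈ distTriang D) (hA : genTriang D S A) :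
    ObjectProperty.isLocal (· ∈ rightOrth D S) g := by
  intro Q hQ
  have hA₀ := noHoms_of_genTriang_left hA hQ
  have hA₁ := noHoms_of_genTriang_left (.shift A 1 hA) hQ
  refine ⟨fun u₁ u₂ (hu : g ≫ u₁ = g ≫ u₂) => ?_, fun v => ?_⟩
  · have hu' : g ≫ (u₁ - u₂) = 0 := by rw [Preadditive.comp_sub, hu, sub_self]
    obtain ⟨t, ht⟩ := Triangle.yoneda_exact₃ _ hT (u₁ - u₂) hu'
    rw [hA₁.eq_zero t] at ht
    exact sub_eq_zero.1 (ht.trans comp_zero)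
  · obtain ⟨w, hw⟩ := Triangle.yoneda_exact₂ _ hT v (hA₀.eq_zero _)
    exact ⟨w, hw.symm⟩

lemma noHoms_of_isLocal {S : Set D} {X W Q : D} {c : X ⟶ W}
    (hc : ObjectProperty.isLocal (· ∈ rightOrth D S) c) (hQ : Q ∈ rightOrth D S)
    (hXQ : NoHoms D X Q) : NoHoms D W Q := fun n f =>
  (hc _ fun s hs => (hQ s hs).shift n).1 (by simp [hXQ n (c ≫ f)])

lemma IsLeftMutation.isRightMutation {S : Set D} {X Y : D} (h : IsLeftMutation D S X Y) :
    IsRightMutation D S X Y := by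
  obtain ⟨hX, hY, A, f, g, h, hA, hT⟩ := h
  exact ⟨hX, hY, A⟦(1 : ℤ)⟧, g, h, -f⟦(1 : ℤ)⟧', .shift A 1 hA, rot_of_distTriang _ hT⟩

lemma IterLeftMut.iterRightMut {l : List D} {X Y : D} (h : IterLeftMut D l X Y) :
    IterRightMut D l Y X := by
  induction l generalizing Y with
  | nil => exact h.map Iso.symm
  | cons E t ih =>
    obtain ⟨Z, hZ, hY⟩ := h
    exact ⟨Z, hY.isRightMutation, ih hZ⟩

lemma IsLeftMutation.of_iso {S : Set D} {X Y Y' : D} (h : IsLeftMutation D S X Y) (e : Y ≅ Y') :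
    IsLeftMutation D S X Y' := by
  obtain ⟨hX, hY, A, f, g, h, hA, hT⟩ := h
  refine ⟨hX, fun s hs => (hY s hs).of_iso e, A, f, g ≫ e.hom, e.inv ≫ h, hA,
    isomorphic_distinguished _ hT _ ?_⟩
  exact Triangle.isoMk _ _ (Iso.refl _) (Iso.refl _) e.symm
    (by simp [Triangle.mk]) (by simp [Triangle.mk]) (by simp [Triangle.mk])

lemma IterLeftMut.of_iso {l : List D} {X Y Y' : D} (h : IterLeftMut D l X Y) (e : Y ≅ Y') :
    IterLeftMut D l X Y' := by
  cases l with
  | nil => exact h.map (·.trans e)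
  | cons E t =>
    obtain ⟨Z, hZ, hY⟩ := h
    exact ⟨Z, hZ, hY.of_iso e⟩

variable [Linear ℂ D]

section Evaluation

variable (E P : D) (S : Finset ℤ)

/- The summand `E⟦-m⟧` indexed by `(m, j)` stands for the `j`-th vector of a basis of
`Hom(E, P⟦m⟧)`, so that `evalSource` is `⊕_{m ∈ S} Hom(E, P⟦m⟧) ⊗ E⟦-m⟧`. -/
abbrev EvalIndex : Type := Σ m : S, Fin (Module.finrank ℂ (E ⟶ P⟦(m : ℤ)⟧))

abbrev evalFamily (i : EvalIndex E P S) : D := E⟦-(i.1 : ℤ)⟧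

noncomputable abbrev evalSource : D := ⨁ evalFamily E P S

lemma genTriang_evalSource : genTriang D {E} (evalSource E P S) :=
  genTriang_biproduct _ fun _ => .shift E _ (.of E rfl)

variable [∀ n : ℤ, FiniteDimensional ℂ (E ⟶ P⟦n⟧)]

noncomputable def evalMap : evalSource E P S ⟶ P :=
  biproduct.desc fun i =>
    ((shiftEquiv' D (-(i.1 : ℤ)) i.1 (neg_add_cancel _)).toAdjunction.homEquiv E P).symm
      (Module.finBasis ℂ (E ⟶ P⟦(i.1 : ℤ)⟧) i.2)

variable {E P S}

lemma ι_evalMap (i : EvalIndex E P S) : biproduct.ι (evalFamily E P S) i ≫ evalMap E P S =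
    ((shiftEquiv' D (-(i.1 : ℤ)) i.1 (neg_add_cancel _)).toAdjunction.homEquiv E P).symm
      (Module.finBasis ℂ (E ⟶ P⟦(i.1 : ℤ)⟧) i.2) :=
  biproduct.ι_desc _ _

lemma evalMap_shift_bijective_of_mem (hE : IsExceptional D E) (m : S) :
    Function.Bijective fun v : E ⟶ (evalSource E P S)⟦(m : ℤ)⟧ =>
      v ≫ (evalMap E P S)⟦(m : ℤ)⟧' := by
  let e := shiftEquiv' D (-(m : ℤ)) m (neg_add_cancel _)
  let u : E ⟶ E⟦-(m : ℤ)⟧⟦(m : ℤ)⟧ := e.unit.app E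
  have hu (f : E ⟶ P⟦(m : ℤ)⟧) : u ≫ ((e.toAdjunction.homEquiv E P).symm f)⟦(m : ℤ)⟧' = f :=
    (e.toAdjunction.homEquiv_unit _ _ _).symm.trans (Equiv.apply_symm_apply _ _)
  let b := Module.finBasis ℂ (E ⟶ P⟦(m : ℤ)⟧)
  let Ψ (c : Fin (Module.finrank ℂ (E ⟶ P⟦(m : ℤ)⟧)) → ℂ) : E ⟶ (evalSource E P S)⟦(m : ℤ)⟧ :=
    ∑ j, c j • (u ≫ (biproduct.ι (evalFamily E P S) ⟨m, j⟩)⟦(m : ℤ)⟧')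
  -- `Ψ` is onto, and composed with `evalMap` it becomes the coordinate isomorphism of `b`.
  have hΦΨ : (fun v => v ≫ (evalMap E P S)⟦(m : ℤ)⟧') ∘ Ψ = b.equivFun.symm := by
    ext c : 1
    rw [Function.comp_apply, Module.Basis.equivFun_symm_apply, Preadditive.sum_comp]
    refine Finset.sum_congr rfl fun j _ => ?_
    rw [Linear.smul_comp, Category.assoc, ← Functor.map_comp, ι_evalMap, hu]
  have hΨ : Function.Surjective Ψ := by
    intro v
    have : IsIso u := inferInstanceAs (IsIso (e.unit.app E))
    choose c hc using fun j => hE.exists_eq_smul_of_isIso u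
      (v ≫ (biproduct.π (evalFamily E P S) ⟨m, j⟩)⟦(m : ℤ)⟧')
    refine ⟨c, Eq.symm ?_⟩
    rw [eq_sum_comp_map_biproduct (shiftFunctor D (m : ℤ)) _ v, Fintype.sum_sigma,
      Fintype.sum_eq_single m]
    · exact Finset.sum_congr rfl fun j _ => by rw [hc j, Linear.smul_comp]
    · intro m' hm'
      refine Finset.sum_eq_zero fun j _ => ?_
      rw [hE.hom_shift_shift_eq_zero (Subtype.coe_injective.ne hm') (v ≫ _), zero_comp]
  exact ⟨(hΦΨ ▸ b.equivFun.symm.injective).of_comp_right hΨ,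
    (hΦΨ ▸ b.equivFun.symm.surjective).of_comp⟩

lemma evalMap_shift_bijective (hE : IsExceptional D E)
    (hS : ∀ m : ℤ, (∃ f : E ⟶ P⟦m⟧, f ≠ 0) → m ∈ S) (k : ℤ) :
    Function.Bijective fun v : E ⟶ (evalSource E P S)⟦k⟧ => v ≫ (evalMap E P S)⟦k⟧' := by
  by_cases hk : k ∈ S
  · exact evalMap_shift_bijective_of_mem hE ⟨k, hk⟩
  have hv (v : E ⟶ (evalSource E P S)⟦k⟧) : v = 0 := by
    rw [eq_sum_comp_map_biproduct (shiftFunctor D k) _ v]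
    refine Finset.sum_eq_zero fun i _ => ?_
    rw [hE.hom_shift_shift_eq_zero (ne_of_mem_of_not_mem i.1.2 hk) (v ≫ _), zero_comp]
  have hw (w : E ⟶ P⟦k⟧) : w = 0 := by
    by_contra hw
    exact hk (hS k ⟨w, hw⟩)
  exact ⟨fun v₁ v₂ _ => (hv v₁).trans (hv v₂).symm, fun w => ⟨0, by simp [hw w]⟩⟩

end Evaluation

lemma exists_isLeftMutation {E Z : D} (hE : IsExceptional D E) (hZ : Z ∈ leftOrth D {E})
    (hfin : (∀ n : ℤ, FiniteDimensional ℂ (E ⟶ Z⟦n⟧)) ∧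
      {n : ℤ | ∃ f : E ⟶ Z⟦n⟧, f ≠ 0}.Finite) :
    ∃ W, IsLeftMutation D {E} Z W := by
  have := hfin.1
  obtain ⟨W, d, h, hT⟩ := distinguished_cocone_triangle (evalMap E Z hfin.2.toFinset)
  have hW : NoHoms D E W := noHoms_of_distTriang_of_bijective hT
    (evalMap_shift_bijective hE fun m hm => hfin.2.mem_toFinset.2 hm)
  exact ⟨W, hZ, mem_rightOrth_singleton.2 hW, _, _, d, h, genTriang_evalSource _ _ _, hT⟩

lemma exists_isLocal_iterLeftMut (hft : FiniteType D) {l : List D}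
    (hexc : ∀ e ∈ l, IsExceptional D e) (hso : l.Pairwise fun a b => NoHoms D b a) {X : D}
    (hX : X ∈ leftOrth D {e | e ∈ l}) :
    ∃ (W : D) (c : X ⟶ W), W ∈ rightOrth D {e | e ∈ l} ∧
      ObjectProperty.isLocal (· ∈ rightOrth D {e | e ∈ l}) c ∧ IterLeftMut D l X W := by
  induction l with
  | nil => exact ⟨X, 𝟙 X, fun _ h => absurd h List.not_mem_nil,
      ObjectProperty.isLocal_of_isIso _ _, ⟨Iso.refl X⟩⟩
  | cons E t ih =>
    rw [List.pairwise_cons] at hso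
    have hsub : {e | e ∈ t} ⊆ {e | e ∈ E :: t} := fun _ => List.mem_cons_of_mem E
    obtain ⟨Z, c, hZ, hc, hLZ⟩ :=
      ih (fun e he => hexc e (List.mem_cons_of_mem E he)) hso.2 (leftOrth_anti hsub hX)
    have hZE : Z ∈ leftOrth D {E} :=
      mem_leftOrth_singleton.2 (noHoms_of_isLocal hc hso.1 (hX E List.mem_cons_self))
    obtain ⟨W, -, hWE, B, a, d, h, hB, hT⟩ :=
      exists_isLeftMutation (hexc E List.mem_cons_self) hZE (hft E Z)
    refine ⟨W, c ≫ d, rightOrth_cons (mem_rightOrth_singleton.1 hWE) fun s hs => ?_,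
      fun Q hQ => ?_, ⟨Z, hLZ, hZE, hWE, B, a, d, h, hB, hT⟩⟩
    · have hsB : NoHoms D s (B⟦(1 : ℤ)⟧) :=
        noHoms_of_genTriang_right (.shift B 1 hB) (mem_leftOrth_singleton.2 (hso.1 s hs))
      exact NoHoms.of_distTriang (rot_of_distTriang _ hT) (hZ s hs) hsB
    · have hE : ({E} : Set D) ⊆ {e | e ∈ E :: t} := by simp
      have hd := isLocal_rightOrth_of_distTriang hT hB Q (rightOrth_anti hE hQ)
      simpa [Function.comp_def] using (hc Q (rightOrth_anti hsub hQ)).comp hd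

end

/-- If `A → X → Y` is a distinguished triangle with `A ∈ ⟨𝔼⟩`, `X ∈ ^⊥𝔼`
and `Y ∈ 𝔼^⊥` for an exceptional collection `𝔼`, then `Y ≅ L_𝔼(X)` and `X ≅ R_𝔼(Y)`. -/
theorem mutation_characterisation (hft : FiniteType C) (n : ℕ) (E : ℕ → C)
    (hE : ExcCollection C n E) (A X Y : C)
    (hA : genTriang C (collSet C n E) A)
    (hX : X ∈ leftOrth C (collSet C n E))
    (hY : Y ∈ rightOrth C (collSet C n E))
    (f : A ⟶ X) (g : X ⟶ Y) (h : Y ⟶ A⟦(1:ℤ)⟧)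
    (hT : Triangle.mk f g h ∈ distTriang C) :
    IterLeftMut C ((List.range n).map E) X Y ∧
      IterRightMut C ((List.range n).map E) Y X := by
  rw [← setOf_mem_map_range_eq_collSet] at hA hX hY
  obtain ⟨W, c, hW, hc, hXW⟩ :=
    exists_isLocal_iterLeftMut hft hE.forall_mem_isExceptional hE.pairwise hX
  obtain ⟨e⟩ := nonempty_iso_of_isLocal hc (isLocal_rightOrth_of_distTriang hT hA) hW hY
  exact ⟨hXW.of_iso e, (hXW.of_iso e).iterRightMut⟩
end

section
/- Let 𝔼 = (E_1,…,E_n) be a full exceptional collection in D and define F_j = L_{E_1}⋯L_{E_{j−1}}(E_j) for 1 ≤ j ≤ n. Then 𝔽 = (F_n,…,F_1) is a full exceptional collection and Hom^k(E_i, F_j) = C if i = j and k = 0, and vanishes otherwise. Conversely, any sequence (F_n,…,F_1) satisfying these orthogonality conditions is given by this formula. -/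
open CategoryTheory Limits Pretriangulated

universe v u

variable (C : Type u) [Category.{v} C] [Preadditive C] [HasZeroObject C]
  [HasShift C ℤ] [∀ n : ℤ, (CategoryTheory.shiftFunctor C n).Additive] [Pretriangulated C]
  [CategoryTheory.Linear ℂ C]

/-- The orthogonality conditions (freddie) characterising the dual collection:
`Hom^k(E i, G j) = ℂ` if `i = j` and `k = 0`, and `0` otherwise. -/
def DualOrtho (n : ℕ) (E G : ℕ → C) : Prop :=
  ∀ i < n, ∀ j < n,
    (i = j → Module.finrank ℂ (E i ⟶ G j) = 1 ∧
      ∀ k : ℤ, k ≠ 0 → ∀ f : E i ⟶ (G j)⟦k⟧, f = 0) ∧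
    (i ≠ j → ∀ k : ℤ, ∀ f : E i ⟶ (G j)⟦k⟧, f = 0)

/-!
Each mutation `L_E Z` sits in a triangle `A → Z → L_E Z` with `A` in the subcategory generated by
`E`, so the composite `ε_j : E_j ⟶ F_j` of these maps identifies `Hom^•(W, E_j)` with
`Hom^•(W, F_j)` whenever `W` is left orthogonal to `E_0, …, E_(j-1)`, and `Hom(F_j, W)` with
`Hom(E_j, W)` whenever `W` is right orthogonal to them. The first identification gives
`Hom^•(E_i, F_j)` for `i ≥ j`; for `i < j`, `F_j` already lies in `E_i^⊥` after the mutation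
through `E_i`, and the mutations through `E_0, …, E_(i-1)` keep it there. The second
identification transfers these relations to `Hom^•(F_a, F_b)`. Conversely, if `G` satisfies the
same relations, lifting a generator of `Hom(E_j, G_j)` along `ε_j` gives `F_j ⟶ G_j` inducing
isomorphisms on every `Hom^•(E_i, -)`; its cone is then orthogonal to the generating collection,
hence zero.
-/

open Opposite

lemma forall_eq_zero_iff_of_bijective {M N : Type*} [Zero M] [Zero N] {g : M → N}
    (hg : Function.Bijective g) (h0 : g 0 = 0) : (∀ x : M, x = 0) ↔ ∀ y : N, y = 0 := by
  refine ⟨fun h y => ?_, fun h x => hg.1 (by rw [h (g x), h0])⟩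
  obtain ⟨x, rfl⟩ := hg.2 y
  rw [h x, h0]

lemma LinearMap.bijective_of_finrank_eq_one {K V W : Type*} [Field K] [AddCommGroup V]
    [Module K V] [AddCommGroup W] [Module K W] (hV : Module.finrank K V = 1)
    (hW : Module.finrank K W = 1) {f : V →ₗ[K] W} (hf : f ≠ 0) : Function.Bijective f := by
  have : FiniteDimensional K V := .of_finrank_eq_succ hV
  have : FiniteDimensional K W := .of_finrank_eq_succ hW
  have hsurj := surjective_of_nonzero_of_finrank_eq_one hW hf
  exact ⟨(injective_iff_surjective_of_finrank_eq_finrank (hV.trans hW.symm)).2 hsurj, hsurj⟩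

lemma List.exists_map_range_eq_append_cons {α : Type*} (f : ℕ → α) {i j : ℕ} (hij : i < j) :
    ∃ t, (List.range j).map f = (List.range i).map f ++ f i :: t := by
  obtain ⟨m, rfl⟩ := Nat.exists_eq_add_of_lt hij
  refine ⟨(List.range m).map (fun x => f (i + 1 + x)), ?_⟩
  rw [add_assoc, List.range_add, List.range_succ_eq_map]
  simp [Function.comp_def, add_assoc, add_comm 1]

lemma bijective_comp_shift_zero_iff {C : Type*} [Category C] [HasShift C ℤ] {W X Y : C}
    (f : X ⟶ Y) :
    Function.Bijective (fun u : W ⟶ X⟦(0 : ℤ)⟧ => u ≫ f⟦(0 : ℤ)⟧') ↔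
      Function.Bijective (fun u : W ⟶ X => u ≫ f) := by
  let e : ∀ Z : C, (W ⟶ Z) ≃ (W ⟶ Z⟦(0 : ℤ)⟧) :=
    fun Z => ((shiftFunctorZero C ℤ).app Z).symm.homToEquiv
  have hf : (fun u : W ⟶ X => u ≫ f) =
      (e Y).symm ∘ (fun u : W ⟶ X⟦(0 : ℤ)⟧ => u ≫ f⟦(0 : ℤ)⟧') ∘ e X := by
    funext u
    simp [e]
  rw [hf, Equiv.comp_bijective, Equiv.bijective_comp]

section Shift

variable {C : Type*} [Category C] [Preadditive C] [HasShift C ℤ]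

namespace NoHoms

lemma eq_zero_s7 {X Y : C} (h : NoHoms C X Y) (f : X ⟶ Y) : f = 0 := by
  rw [← cancel_mono ((shiftFunctorZero C ℤ).inv.app Y), zero_comp]
  exact h 0 _

lemma shift_right {X Y : C} (h : NoHoms C X Y) (m : ℤ) : NoHoms C X (Y⟦m⟧) := by
  intro k f
  rw [← cancel_mono ((shiftFunctorAdd C m k).inv.app Y), zero_comp]
  exact h _ _

lemma shift_left {X Y : C} (h : NoHoms C X Y) (m : ℤ) : NoHoms C (X⟦m⟧) Y := by
  intro k f
  apply (shiftFunctor C (-m)).map_injective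
  rw [Functor.map_zero,
    ← cancel_epi ((shiftFunctorCompIsoId C m (-m) (add_neg_cancel m)).inv.app X),
    ← cancel_mono ((shiftFunctorAdd C k (-m)).inv.app Y)]
  simp only [comp_zero, zero_comp, Category.assoc]
  exact h _ _

lemma of_iso_left {X X' Y : C} (h : NoHoms C X Y) (e : X ≅ X') : NoHoms C X' Y := by
  intro k f
  rw [← cancel_epi e.hom, comp_zero]
  exact h k _

lemma of_iso_right {X Y Y' : C} (h : NoHoms C X Y) (e : Y ≅ Y') : NoHoms C X Y' := by
  intro k f
  rw [← cancel_mono (e.inv⟦k⟧'), zero_comp]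
  exact h k _

end NoHoms

lemma noHoms_iff_homologicalKernel_s7 (V W : C) :
    NoHoms C V W ↔ (preadditiveCoyoneda.obj (op V)).homologicalKernel W := by
  rw [Functor.mem_homologicalKernel_iff]
  simp only [AddCommGrpCat.isZero_iff_subsingleton]
  exact forall_congr' fun n =>
    ⟨fun h => ⟨fun a b => (h a).trans (h b).symm⟩, fun h f => @Subsingleton.elim _ h f 0⟩

end Shift

section Pretriangulated

variable {C : Type*} [Category C] [Preadditive C] [HasZeroObject C] [HasShift C ℤ]
  [∀ n : ℤ, (shiftFunctor C n).Additive] [Pretriangulated C]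

lemma noHoms_obj₃_iff_bijective {T : Triangle C} (hT : T ∈ distTriang C) (V : C) :
    NoHoms C V T.obj₃ ↔
      ∀ k : ℤ, Function.Bijective (fun u : V ⟶ T.obj₁⟦k⟧ => u ≫ T.mor₁⟦k⟧') := by
  rw [noHoms_iff_homologicalKernel_s7,
    ← (preadditiveCoyoneda.obj (op V)).homologicalKernel.trW_iff_of_distinguished T hT,
    Functor.mem_homologicalKernel_trW_iff]
  simp only [ConcreteCategory.isIso_iff_bijective]
  rfl

lemma noHoms_obj₁_iff_bijective {T : Triangle C} (hT : T ∈ distTriang C) (V : C) :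
    NoHoms C V T.obj₁ ↔
      ∀ k : ℤ, Function.Bijective (fun u : V ⟶ T.obj₂⟦k⟧ => u ≫ T.mor₂⟦k⟧') := by
  rw [noHoms_iff_homologicalKernel_s7,
    ← (preadditiveCoyoneda.obj (op V)).homologicalKernel.trW_iff_of_distinguished' T hT,
    Functor.mem_homologicalKernel_trW_iff]
  simp only [ConcreteCategory.isIso_iff_bijective]
  rfl

lemma bijective_mor₂_comp_of_noHoms {T : Triangle C} (hT : T ∈ distTriang C) {W : C}
    (h : NoHoms C T.obj₁ W) : Function.Bijective (fun f : T.obj₃ ⟶ W => T.mor₂ ≫ f) := by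
  refine ⟨fun f₁ f₂ hf => ?_, fun u => ?_⟩
  · obtain ⟨g, hg⟩ := T.yoneda_exact₃ hT (f₁ - f₂)
      (by rw [Preadditive.comp_sub, sub_eq_zero]; exact hf)
    rwa [(h.shift_left 1).eq_zero_s7 g, comp_zero, sub_eq_zero] at hg
  · obtain ⟨g, hg⟩ := T.yoneda_exact₂ hT u (h.eq_zero_s7 _)
    exact ⟨g, hg.symm⟩

namespace genTriang

variable {S : Set C}

lemma le_of_isTriangulated (P : ObjectProperty C) [P.IsTriangulated]
    [P.IsClosedUnderIsomorphisms] (hS : ∀ X ∈ S, P X) {X : C} (hX : genTriang C S X) : P X := by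
  induction hX with
  | of X hX => exact hS X hX
  | isZero X hX => exact P.prop_of_isZero hX
  | iso e _ ih => exact P.prop_of_iso e ih
  | shift X n _ ih => exact P.le_shift n X ih
  | ext₂ T hT _ _ ih₁ ih₃ => exact P.ext_of_isTriangulatedClosed₂ T hT ih₁ ih₃

lemma trans {S' : Set C} (hS : ∀ X ∈ S, genTriang C S' X) {X : C} (hX : genTriang C S X) :
    genTriang C S' X := by
  induction hX with
  | of X hX => exact hS X hX
  | isZero X hX => exact .isZero X hX
  | iso e _ ih => exact .iso e ih
  | shift X n _ ih => exact .shift X n ih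
  | ext₂ T hT _ _ ih₁ ih₃ => exact .ext₂ T hT ih₁ ih₃

lemma noHoms_right {W : C} (hS : ∀ X ∈ S, NoHoms C W X) {A : C} (hA : genTriang C S A) :
    NoHoms C W A := by
  simp only [noHoms_iff_homologicalKernel_s7] at hS ⊢
  exact hA.le_of_isTriangulated _ hS

lemma noHoms_left {W : C} (hS : ∀ X ∈ S, NoHoms C X W) {A : C} (hA : genTriang C S A) :
    NoHoms C A W := by
  induction hA with
  | of X hX => exact hS X hX
  | isZero X hX => exact fun k f => hX.eq_of_src f 0
  | iso e _ ih => exact ih.of_iso_left e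
  | shift X m _ ih => exact ih.shift_left m
  | ext₂ T hT _ _ ih₁ ih₃ =>
      intro k f
      obtain ⟨g, rfl⟩ := T.yoneda_exact₂ hT f (ih₁ k _)
      rw [ih₃ k g, comp_zero]

end genTriang

/-- The cone of such a `φ` is right orthogonal to a generating set, hence to itself. -/
lemma isIso_of_bijective_comp_shift {S : Set C} (hfull : ∀ X : C, genTriang C S X) {X Y : C}
    (φ : X ⟶ Y)
    (hφ : ∀ E ∈ S, ∀ k : ℤ, Function.Bijective (fun u : E ⟶ X⟦k⟧ => u ≫ φ⟦k⟧')) :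
    IsIso φ := by
  obtain ⟨Z, g, h, hT⟩ := distinguished_cocone_triangle φ
  have hZ : ∀ E ∈ S, NoHoms C E Z := fun E hE => (noHoms_obj₃_iff_bijective hT E).2 (hφ E hE)
  have hZZ : NoHoms C Z Z := (hfull Z).noHoms_left hZ
  exact (Triangle.isZero₃_iff_isIso₁ _ hT).1 ((IsZero.iff_id_eq_zero Z).2 (hZZ.eq_zero_s7 (𝟙 Z)))

namespace IterLeftMut

variable {l : List C} {X Y : C}

/-- The canonical map `X ⟶ L_l X`: it identifies `Hom^•(W, -)` of source and target when `W`
is left orthogonal to `l`, and `Hom(-, W)` when `W` is right orthogonal to `l`. -/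
lemma exists_hom (h : IterLeftMut C l X Y) : ∃ ε : X ⟶ Y,
    (∀ W : C, (∀ E ∈ l, NoHoms C W E) →
      ∀ k : ℤ, Function.Bijective (fun u : W ⟶ X⟦k⟧ => u ≫ ε⟦k⟧')) ∧
    (∀ W : C, (∀ E ∈ l, NoHoms C E W) → Function.Bijective (fun f : Y ⟶ W => ε ≫ f)) := by
  induction l generalizing Y with
  | nil =>
      obtain ⟨e⟩ := h
      exact ⟨e.hom, fun W _ k => ((shiftFunctor C k).mapIso e).homToEquiv.bijective,
        fun W _ => e.homFromEquiv.symm.bijective⟩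
  | cons E l ih =>
      obtain ⟨Z, hZ, -, -, A, a, g, b, hA, hT⟩ := h
      obtain ⟨ε, hcov, hcon⟩ := ih hZ
      refine ⟨ε ≫ g, fun W hW k => ?_, fun W hW => ?_⟩
      · have hWA : NoHoms C W A := hA.noHoms_right (by simpa using hW E (by simp))
        have hg : Function.Bijective (fun u : W ⟶ Z⟦k⟧ => u ≫ g⟦k⟧') :=
          (noHoms_obj₁_iff_bijective hT W).1 hWA k
        simp only [Functor.map_comp, ← Category.assoc]
        exact hg.comp (hcov W (fun E' hE' => hW E' (List.mem_cons_of_mem _ hE')) k)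
      · have hAW : NoHoms C A W := hA.noHoms_left (by simpa using hW E (by simp))
        have hg : Function.Bijective (fun f : Y ⟶ W => g ≫ f) :=
          bijective_mor₂_comp_of_noHoms hT hAW
        simp only [Category.assoc]
        exact (hcon W (fun E' hE' => hW E' (List.mem_cons_of_mem _ hE'))).comp hg

lemma of_iso_s7 {Y' : C} (h : IterLeftMut C l X Y) (e : Y ≅ Y') : IterLeftMut C l X Y' := by
  cases l with
  | nil => exact ⟨h.some.trans e⟩
  | cons E l =>
      obtain ⟨Z, hZ, hlo, hro, A, a, g, b, hA, hT⟩ := h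
      refine ⟨Z, hZ, hlo, fun E' hE' => (hro E' hE').of_iso_right e, A, a, g ≫ e.hom,
        e.inv ≫ b, hA, isomorphic_distinguished _ hT _
          (Triangle.isoMk _ _ (Iso.refl _) (Iso.refl _) e.symm ?_ ?_ ?_)⟩
      all_goals simp [Triangle.mk]

lemma append {l₁ l₂ : List C} (h : IterLeftMut C (l₁ ++ l₂) X Y) :
    ∃ Z, IterLeftMut C l₂ X Z ∧ IterLeftMut C l₁ Z Y := by
  induction l₁ generalizing Y with
  | nil => exact ⟨Y, h, ⟨Iso.refl Y⟩⟩
  | cons E l₁ ih =>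
      obtain ⟨Z₁, hZ₁, hmut⟩ := h
      obtain ⟨Z, h₁, h₂⟩ := ih hZ₁
      exact ⟨Z, h₁, Z₁, h₂, hmut⟩

lemma genTriang_of_target {S : Set C} (h : IterLeftMut C l X Y) (hY : genTriang C S Y)
    (hl : ∀ E ∈ l, genTriang C S E) : genTriang C S X := by
  induction l generalizing Y with
  | nil => exact .iso h.some.symm hY
  | cons E l ih =>
      obtain ⟨Z, hZ, -, -, A, a, g, b, hA, hT⟩ := h
      have hA' : genTriang C S A := hA.trans (by simpa using hl E (by simp))
      exact ih hZ (.ext₂ _ hT hA' hY) (fun E' hE' => hl E' (List.mem_cons_of_mem _ hE'))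

/-- The mutation through `E` lands in `E^⊥`, and the later mutations through `l₁` do not change
`Hom^•(E, -)`. -/
lemma noHoms_of_mem {l₁ l₂ : List C} {E : C} (h : IterLeftMut C (l₁ ++ E :: l₂) X Y)
    (hl₁ : ∀ E' ∈ l₁, NoHoms C E E') : NoHoms C E Y := by
  obtain ⟨Z, ⟨Z', -, -, hZ, -⟩, hZY⟩ := h.append
  obtain ⟨ε, hcov, -⟩ := hZY.exists_hom
  intro k
  exact (forall_eq_zero_iff_of_bijective (hcov E hl₁ k) zero_comp).1 (hZ E rfl k)

lemma exists_hom_range {E : ℕ → C} {j : ℕ} {X Y : C}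
    (h : IterLeftMut C ((List.range j).map E) X Y) : ∃ ε : X ⟶ Y,
    (∀ W : C, (∀ i < j, NoHoms C W (E i)) →
      ∀ k : ℤ, Function.Bijective (fun u : W ⟶ X⟦k⟧ => u ≫ ε⟦k⟧')) ∧
    (∀ W : C, (∀ i < j, NoHoms C (E i) W) → Function.Bijective (fun f : Y ⟶ W => ε ≫ f)) := by
  simpa only [List.forall_mem_map, List.mem_range] using h.exists_hom

end IterLeftMut

lemma genTriang_collSet_dual {n : ℕ} {E F : ℕ → C}
    (hF : ∀ j < n, IterLeftMut C ((List.range j).map E) (E j) (F j))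
    {j : ℕ} (hj : j < n) : genTriang C (collSet C n F) (E j) := by
  induction j using Nat.strong_induction_on with
  | _ j ih =>
    refine (hF j hj).genTriang_of_target (.of _ ⟨j, hj, rfl⟩) ?_
    simp only [List.forall_mem_map, List.mem_range]
    exact fun i hi => ih i hi (hi.trans hj)

end Pretriangulated

lemma DualOrtho.eq_zero_s7 {C : Type*} [Category C] [Preadditive C] [HasShift C ℤ] [Linear ℂ C]
    {n : ℕ} {E G : ℕ → C} (h : DualOrtho C n E G) {i j : ℕ} (hi : i < n) (hj : j < n)
    {k : ℤ} (hijk : ¬(i = j ∧ k = 0)) (f : E i ⟶ (G j)⟦k⟧) : f = 0 := by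
  by_cases hij : i = j
  · exact ((h i hi j hj).1 hij).2 k (fun hk => hijk ⟨hij, hk⟩) f
  · exact (h i hi j hj).2 hij k f

section DualCollection

variable {C : Type*} [Category C] [Preadditive C] [HasZeroObject C] [HasShift C ℤ]
  [∀ n : ℤ, (shiftFunctor C n).Additive] [Pretriangulated C] [Linear ℂ C] {n : ℕ} {E : ℕ → C}

namespace ExcCollection

variable {F : ℕ → C} {i j : ℕ} {Y : C}

lemma noHoms_iterLeftMut_of_lt (hE : ExcCollection C n E)
    (h : IterLeftMut C ((List.range j).map E) (E j) Y) (hij : i < j) (hj : j < n) :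
    NoHoms C (E i) Y := by
  obtain ⟨t, ht⟩ := List.exists_map_range_eq_append_cons E hij
  rw [ht] at h
  refine h.noHoms_of_mem ?_
  simp only [List.forall_mem_map, List.mem_range]
  exact fun l hl => hE.2 l i hl (hij.trans hj)

lemma noHoms_iterLeftMut_of_gt (hE : ExcCollection C n E)
    (h : IterLeftMut C ((List.range j).map E) (E j) Y) (hji : j < i) (hi : i < n) :
    NoHoms C (E i) Y := by
  obtain ⟨ε, hcov, -⟩ := h.exists_hom_range
  intro k
  exact (forall_eq_zero_iff_of_bijective (hcov (E i) (fun l hl => hE.2 l i (hl.trans hji) hi) k)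
    zero_comp).1 (hE.2 j i hji hi k)

lemma hom_shift_iterLeftMut_eq_zero (hE : ExcCollection C n E)
    (h : IterLeftMut C ((List.range j).map E) (E j) Y) (hj : j < n) {k : ℤ} (hk : k ≠ 0)
    (f : E j ⟶ Y⟦k⟧) : f = 0 := by
  obtain ⟨ε, hcov, -⟩ := h.exists_hom_range
  exact (forall_eq_zero_iff_of_bijective (hcov (E j) (fun i hi => hE.2 i j hi hj) k)
    zero_comp).1 ((hE.1 j hj).1 k hk) f

lemma finrank_hom_iterLeftMut (hE : ExcCollection C n E)
    (h : IterLeftMut C ((List.range j).map E) (E j) Y) (hj : j < n) :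
    Module.finrank ℂ (E j ⟶ Y) = 1 := by
  obtain ⟨ε, hcov, -⟩ := h.exists_hom_range
  have hε := (bijective_comp_shift_zero_iff ε).1 (hcov (E j) (fun i hi => hE.2 i j hi hj) 0)
  rw [← (hE.1 j hj).2]
  exact (LinearEquiv.ofBijective (Linear.rightComp ℂ (E j) ε) hε).finrank_eq.symm

lemma dualOrtho (hE : ExcCollection C n E)
    (hF : ∀ j < n, IterLeftMut C ((List.range j).map E) (E j) (F j)) : DualOrtho C n E F := by
  intro i hi j hj
  refine ⟨fun hij => ?_, fun hij => ?_⟩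
  · subst hij
    exact ⟨hE.finrank_hom_iterLeftMut (hF i hj) hj,
      fun k hk => hE.hom_shift_iterLeftMut_eq_zero (hF i hj) hj hk⟩
  · rcases lt_or_gt_of_ne hij with hlt | hgt
    · exact hE.noHoms_iterLeftMut_of_lt (hF j hj) hlt hj
    · exact hE.noHoms_iterLeftMut_of_gt (hF j hj) hgt hi

lemma isExceptional_dual (hE : ExcCollection C n E)
    (hF : ∀ j < n, IterLeftMut C ((List.range j).map E) (E j) (F j)) (hj : j < n) :
    IsExceptional C (F j) := by
  obtain ⟨ε, -, hcon⟩ := (hF j hj).exists_hom_range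
  have hEF : ∀ i < j, NoHoms C (E i) (F j) :=
    fun i hi => hE.noHoms_iterLeftMut_of_lt (hF j hj) hi hj
  refine ⟨fun k hk => ?_, ?_⟩
  · exact (forall_eq_zero_iff_of_bijective (hcon _ fun i hi => (hEF i hi).shift_right k)
      comp_zero).2 (hE.hom_shift_iterLeftMut_eq_zero (hF j hj) hj hk)
  · rw [← hE.finrank_hom_iterLeftMut (hF j hj) hj]
    exact (LinearEquiv.ofBijective (Linear.leftComp ℂ (F j) ε) (hcon _ hEF)).finrank_eq

lemma noHoms_dual (hE : ExcCollection C n E)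
    (hF : ∀ j < n, IterLeftMut C ((List.range j).map E) (E j) (F j)) (hij : i < j) (hj : j < n) :
    NoHoms C (F i) (F j) := by
  obtain ⟨ε, -, hcon⟩ := (hF i (hij.trans hj)).exists_hom_range
  intro k
  exact (forall_eq_zero_iff_of_bijective
    (hcon _ fun l hl => (hE.noHoms_iterLeftMut_of_lt (hF j hj) (hl.trans hij) hj).shift_right k)
    comp_zero).2 (hE.noHoms_iterLeftMut_of_lt (hF j hj) hij hj k)

lemma iterLeftMut_of_dualOrtho (hE : ExcCollection C n E)
    (hfull : ∀ X : C, genTriang C (collSet C n E) X)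
    (hF : ∀ j < n, IterLeftMut C ((List.range j).map E) (E j) (F j)) {G : ℕ → C}
    (hG : DualOrtho C n E G) (hj : j < n) :
    IterLeftMut C ((List.range j).map E) (E j) (G j) := by
  have hEF := hE.dualOrtho hF
  obtain ⟨ε, -, hcon⟩ := (hF j hj).exists_hom_range
  obtain ⟨hrank, -⟩ := (hG j hj j hj).1 rfl
  have : Nontrivial (E j ⟶ G j) := Module.nontrivial_of_finrank_pos (R := ℂ) (by omega)
  obtain ⟨ψ, hψ⟩ := exists_ne (0 : E j ⟶ G j)
  obtain ⟨φ, hφ⟩ := (hcon (G j) fun i hi => (hG i (hi.trans hj) j hj).2 hi.ne).2 ψ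
  suffices IsIso φ from (hF j hj).of_iso_s7 (asIso φ)
  refine isIso_of_bijective_comp_shift hfull φ ?_
  rintro _ ⟨i, hi, rfl⟩ k
  by_cases hijk : i = j ∧ k = 0
  · obtain ⟨rfl, rfl⟩ := hijk
    rw [bijective_comp_shift_zero_iff]
    exact LinearMap.bijective_of_finrank_eq_one (f := Linear.rightComp ℂ (E i) φ)
      ((hEF i hi i hi).1 rfl).1 hrank (fun h0 => hψ (hφ.symm.trans (LinearMap.congr_fun h0 ε)))
  · have hF0 := hEF.eq_zero_s7 hi hj hijk
    have hG0 := hG.eq_zero_s7 hi hj hijk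
    exact ⟨fun u v _ => (hF0 u).trans (hF0 v).symm, fun v => ⟨0, (hG0 _).trans (hG0 v).symm⟩⟩

end ExcCollection

end DualCollection

theorem dual_collection (n : ℕ) (E F : ℕ → C)
    (hE : ExcCollection C n E)
    (hfull : ∀ X : C, genTriang C (collSet C n E) X)
    (hF : ∀ j < n, IterLeftMut C ((List.range j).map E) (E j) (F j)) :
    (ExcCollection C n (fun i => F (n - 1 - i)) ∧
      (∀ X : C, genTriang C (collSet C n F) X)) ∧
    DualOrtho C n E F ∧
    (∀ G : ℕ → C, DualOrtho C n E G →
      ∀ j < n, IterLeftMut C ((List.range j).map E) (E j) (G j)) := by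
  have hexc : ExcCollection C n (fun i => F (n - 1 - i)) :=
    ⟨fun i _ => hE.isExceptional_dual hF (by omega),
      fun i j hij hj => hE.noHoms_dual hF (by omega) (by omega)⟩
  have hgen : ∀ X : C, genTriang C (collSet C n F) X := by
    refine fun X => (hfull X).trans ?_
    rintro _ ⟨j, hj, rfl⟩
    exact genTriang_collSet_dual hF hj
  exact ⟨⟨hexc, hgen⟩, hE.dualOrtho hF, fun G hG j hj => hE.iterLeftMut_of_dualOrtho hfull hF hG hj⟩
end
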